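/- (Orthonormality of the fractional Fourier series basis.) Let α ∈ (0, π/2), T > 0, and set t₀ = 2π·sin α / T. Define the basis functions φ_n : ℝ → ℂ for n ∈ ℤ by φ_n(t) = K_{−α}(t, n·t₀) / √(T·csc α/(2π)). Then for all integers n, m: ∫_{−T/2}^{T/2} φ_n(t)·conj(φ_m(t)) dt = 1 if n = m, and = 0 if n ≠ m. -/

import Mathlib

/-!
The constant factor `√((1 - i cot α) / 2π)` of the kernel has squared modulus
`|1 - i cot α| / 2π = 1 / (2π |sin α|)`, and the rest of the kernel is unimodular. In
`φ n t · conj (φ m t)` the chirps `exp (± i t² cot α / 2)` cancel and, because `t₀ = 2π sin α / T`,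
the remaining linear phase `t (n - m) t₀ / sin α` is `2π (n - m) t / T`. So the product is `1 / T`
times a constant phase times a Fourier character, whose integral over a period is `T` or `0`.
-/

open MeasureTheory Real Complex

noncomputable def frftKernel (α t u : ℝ) : ℂ :=
  (((1 : ℂ) - Complex.I * ((Real.cos α / Real.sin α : ℝ) : ℂ)) / (2 * (Real.pi : ℂ))) ^ ((1 : ℂ)/2) *
    Complex.exp (Complex.I * ((u : ℂ)^2 / 2) * ((Real.cos α / Real.sin α : ℝ) : ℂ)) *
    Complex.exp (-(Complex.I * (t : ℂ) * (u : ℂ) * (((Real.sin α : ℝ) : ℂ))⁻¹)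
      + Complex.I * ((t : ℂ)^2 / 2) * ((Real.cos α / Real.sin α : ℝ) : ℂ))

open ComplexConjugate

lemma Complex.cpow_one_half_mul_conj (w : ℂ) : w ^ (1 / 2 : ℂ) * conj (w ^ (1 / 2 : ℂ)) = ‖w‖ := by
  rw [mul_conj', ← ofReal_pow, ← norm_pow, one_div, cpow_ofNat_inv_pow]

lemma Complex.norm_one_sub_I_mul_ofReal (c : ℝ) : ‖1 - I * c‖ = √(1 + c ^ 2) := by
  rw [← norm_conj, show conj (1 - I * c) = ((1 : ℝ) : ℂ) + c * I by simp; ring,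
    norm_add_mul_I, one_pow]

lemma Real.sqrt_one_add_cot_sq {α : ℝ} (hα : sin α ≠ 0) :
    √(1 + (cos α / sin α) ^ 2) = |sin α|⁻¹ := by
  rw [← abs_inv, ← sqrt_sq_eq_abs]
  congr 1
  field_simp
  linarith [sin_sq_add_cos_sq α]

lemma integral_exp_int_mul_period (k : ℤ) {T : ℝ} (hT : T ≠ 0) (a : ℝ) :
    ∫ t in a..a + T, exp (2 * π * I * k * t / T) = if k = 0 then (T : ℂ) else 0 := by
  split_ifs with hk
  · simp [hk]
  · have hk' : (k : ℂ) ≠ 0 := by exact_mod_cast hk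
    have hT' : (T : ℂ) ≠ 0 := by exact_mod_cast hT
    have hc : 2 * π * I * k / T ≠ 0 := by simp [pi_ne_zero, I_ne_zero, hk', hT']
    simp_rw [show ∀ t : ℂ, 2 * π * I * k * t / T = 2 * π * I * k / T * t from
      fun t => by ring]
    rw [integral_exp_mul_complex hc, div_eq_zero_iff, sub_eq_zero]
    left
    rw [show 2 * π * I * k / T * ((a + T : ℝ) : ℂ) = 2 * π * I * k / T * a + k * (2 * π * I) by
      push_cast; field_simp, Complex.exp_add, exp_int_mul_two_pi_mul_I, mul_one]

lemma frftKernel_mul_conj {α : ℝ} (hα : Real.sin α ≠ 0) (t u v : ℝ) :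
    frftKernel α t u * conj (frftKernel α t v) =
      ((2 * π * |Real.sin α|)⁻¹ : ℝ) *
        exp (I * ((u ^ 2 - v ^ 2) / 2 * (Real.cos α / Real.sin α) - t * (u - v) / Real.sin α : ℝ)) := by
  set A : ℂ := ((1 - I * ((Real.cos α / Real.sin α : ℝ) : ℂ)) / (2 * π)) ^ (1 / 2 : ℂ)
  have hA : A * conj A = ((2 * π * |Real.sin α|)⁻¹ : ℝ) := by
    rw [cpow_one_half_mul_conj, norm_div, norm_one_sub_I_mul_ofReal, sqrt_one_add_cot_sq hα,
      show (2 * π : ℂ) = ((2 * π : ℝ) : ℂ) by push_cast; rfl, norm_real, norm_of_nonneg (by positivity)]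
    push_cast
    ring
  simp only [frftKernel, map_mul, ← exp_conj]
  rw [show ∀ E₁ E₂ E₃ E₄ : ℂ, A * E₁ * E₂ * (conj A * E₃ * E₄) = A * conj A * (E₁ * E₂ * E₃ * E₄)
    from fun _ _ _ _ => by ring, hA, ← Complex.exp_add, ← Complex.exp_add, ← Complex.exp_add]
  congr 2
  simp only [map_add, map_neg, map_mul, map_div₀, map_pow, map_inv₀, conj_I, conj_ofReal, map_ofNat]
  push_cast
  ring

lemma frftKernel_neg_mul_conj_of_lattice {α T t₀ : ℝ} (hα : 0 < Real.sin α) (hT : T ≠ 0)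
    (ht₀ : t₀ = 2 * π * Real.sin α / T) (n m : ℤ) (t : ℝ) :
    frftKernel (-α) t (n * t₀) * conj (frftKernel (-α) t (m * t₀)) =
      ((2 * π * Real.sin α)⁻¹ : ℝ) * exp (I * (((m : ℝ) ^ 2 - n ^ 2) * t₀ ^ 2 / 2 *
        (Real.cos α / Real.sin α) : ℝ)) * exp (2 * π * I * ((n - m : ℤ) : ℂ) * t / T) := by
  rw [frftKernel_mul_conj (by simpa using hα.ne'), mul_assoc _ (cexp _), ← Complex.exp_add,
    Real.sin_neg, Real.cos_neg, abs_neg, abs_of_pos hα, ht₀]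
  have : Complex.sin α ≠ 0 := by rw [← ofReal_sin]; exact_mod_cast hα.ne'
  have : (T : ℂ) ≠ 0 := by exact_mod_cast hT
  push_cast
  congr 2
  field_simp
  ring

/-- Orthonormality of the fractional Fourier series basis
`φ_n(t) = K_{−α}(t, n·t₀) / √(T·csc α/(2π))` with central fractional frequency
`t₀ = 2π·sin α / T`, on the interval `[−T/2, T/2]`. -/
theorem frfs_basis_orthonormal (α : ℝ) (hα : α ∈ Set.Ioo 0 (Real.pi / 2)) (T : ℝ)
    (hT : 0 < T) (t₀ : ℝ) (ht₀ : t₀ = 2 * Real.pi * Real.sin α / T)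
    (φ : ℤ → ℝ → ℂ)
    (hφ : ∀ (n : ℤ) (t : ℝ), φ n t =
      frftKernel (-α) t ((n : ℝ) * t₀) /
        ((Real.sqrt (T * (Real.sin α)⁻¹ / (2 * Real.pi)) : ℝ) : ℂ)) :
    ∀ n m : ℤ,
      (∫ t in (-(T/2))..(T/2), φ n t * (starRingEnd ℂ) (φ m t)) =
        if n = m then 1 else 0 := by
  intro n m
  have hs : 0 < Real.sin α := sin_pos_of_pos_of_lt_pi hα.1 (by linarith [hα.2, pi_pos])
  have hT' : (T : ℂ) ≠ 0 := by exact_mod_cast hT.ne'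
  set c : ℝ := ((m : ℝ) ^ 2 - n ^ 2) * t₀ ^ 2 / 2 * (Real.cos α / Real.sin α)
  have hprod (t : ℝ) : φ n t * conj (φ m t) =
      (T : ℂ)⁻¹ * exp (I * c) * exp (2 * π * I * ((n - m : ℤ) : ℂ) * t / T) := by
    rw [hφ, hφ, map_div₀, conj_ofReal, div_mul_div_comm, ← ofReal_mul,
      Real.mul_self_sqrt (by positivity), frftKernel_neg_mul_conj_of_lattice hs hT.ne' ht₀]
    have hcoef : (((2 * π * Real.sin α)⁻¹ : ℝ) : ℂ) / ((T * (Real.sin α)⁻¹ / (2 * π) : ℝ) : ℂ) =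
        (T : ℂ)⁻¹ := by
      rw [← ofReal_div, ← ofReal_inv]
      congr 1
      field_simp
    rw [mul_div_right_comm, mul_div_right_comm, hcoef]
  calc (∫ t in (-(T/2))..(T/2), φ n t * conj (φ m t))
      = (T : ℂ)⁻¹ * exp (I * c) * ∫ t in (-(T/2))..(-(T/2) + T),
          exp (2 * π * I * ((n - m : ℤ) : ℂ) * t / T) := by
        rw [show -(T / 2) + T = T / 2 by ring]
        simp_rw [hprod, intervalIntegral.integral_const_mul]
    _ = if n = m then 1 else 0 := by
        simp only [integral_exp_int_mul_period _ hT.ne', sub_eq_zero]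
        split_ifs with hnm
        · simp [c, hnm, hT']
        · rw [mul_zero]
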